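/- arXiv:2101.04580 — 2 statements merged into one kernel-verified Lean document; each statement's English description precedes it below -/
import Mathlib

section
/- A permutation operator P|i⟩|j⟩ = |k_{ij}⟩|l_{ij}⟩ on C^q ⊗ C^q is 2-unitary if and only if the matrices K = (k_{ij}) and L = (l_{ij}) are both Latin squares (each row and each column of each matrix contains distinct entries); together with the bijectivity of (i,j) ↦ (k_{ij}, l_{ij}) this means K and L are mutually orthogonal Latin squares. -/
/-!
`P`, `P^{R2}` and `P^{T2}` are all 0/1 matrices, and a 0/1 matrix is unitary iff every row and
every column contains exactly one `1`: the diagonal entries of `A Aᴴ` and `Aᴴ A` count the `1`s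
in a row and in a column. The entry of `P^{R2}` at `((a, i), (b, β))` is `1` iff
`(k i β, l i β) = (a, b)`, so row `(a, i)` has a single `1` iff `a` occurs exactly once in row `i`
of `K`, and column `(b, β)` has a single `1` iff `b` occurs exactly once in column `β` of `L`.
In the same way `P^{T2}` controls the columns of `K` and the rows of `L`. On `Fin q`, injective
and bijective coincide.
-/

open Matrix

/-- Matrices on `ℂ^q ⊗ ℂ^q`. -/
abbrev MQ (q : ℕ) := Matrix (Fin q × Fin q) (Fin q × Fin q) ℂ

/-- Realignment R2 : `⟨ij|A^{R2}|αβ⟩ = ⟨iα|A|jβ⟩`. -/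
def R2 {q : ℕ} (A : MQ q) : MQ q := fun p r => A (p.1, r.1) (p.2, r.2)

/-- Partial transpose on the second factor: `⟨iβ|A^{T2}|jα⟩ = ⟨iα|A|jβ⟩`. -/
def T2 {q : ℕ} (A : MQ q) : MQ q := fun p r => A (p.1, r.2) (r.1, p.2)

/-- The permutation operator `P|i⟩|j⟩ = |k_{ij}⟩|l_{ij}⟩`. -/
def Pmat {q : ℕ} (k l : Fin q → Fin q → Fin q) : MQ q :=
  fun p r => if p.1 = k r.1 r.2 ∧ p.2 = l r.1 r.2 then 1 else 0

open Finset Function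

theorem existsUnique_prod_fst_eq_and {α β : Type*} (f : β → α) (P : β → Prop) :
    (∃! x : α × β, f x.2 = x.1 ∧ P x.2) ↔ ∃! b, P b := by
  constructor
  · rintro ⟨⟨a, b⟩, ⟨-, hb⟩, huniq⟩
    exact ⟨b, hb, fun b' hb' => congrArg Prod.snd (huniq (f b', b') ⟨rfl, hb'⟩)⟩
  · rintro ⟨b, hb, huniq⟩
    refine ⟨(f b, b), ⟨rfl, hb⟩, fun ⟨a', b'⟩ ⟨ha', hb'⟩ => ?_⟩
    obtain rfl := huniq b' hb'
    exact Prod.ext ha'.symm rfl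

theorem existsUnique_prod_and_fst_eq {α β : Type*} (f : β → α) (P : β → Prop) :
    (∃! x : α × β, P x.2 ∧ f x.2 = x.1) ↔ ∃! b, P b :=
  (existsUnique_congr fun _ => and_comm).trans (existsUnique_prod_fst_eq_and f P)

theorem existsUnique_prod_and_snd_eq {α β : Type*} (f : α → β) (P : α → Prop) :
    (∃! x : α × β, P x.1 ∧ f x.1 = x.2) ↔ ∃! a, P a :=
  ((Equiv.prodComm α β).existsUnique_congr fun _ => Iff.rfl).trans
    (existsUnique_prod_and_fst_eq f P)

namespace Matrix

variable {l m n α : Type*}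

def ofRel [Zero α] [One α] (R : m → n → Prop) [DecidableRel R] : Matrix m n α :=
  of fun i j => if R i j then 1 else 0

theorem ofRel_mul_ofRel_apply [Fintype m] [Semiring α] (R : l → m → Prop) (S : m → n → Prop)
    [DecidableRel R] [DecidableRel S] (i : l) (k : n) :
    ((ofRel R : Matrix l m α) * (ofRel S : Matrix m n α)) i k = #{j | R i j ∧ S j k} := by
  rw [mul_apply]
  simp only [ofRel, of_apply, ite_zero_mul_ite_zero, one_mul]
  exact sum_boole _ _

theorem conjTranspose_ofRel [Semiring α] [StarRing α] (R : m → n → Prop) [DecidableRel R] :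
    (ofRel R : Matrix m n α)ᴴ = ofRel (fun j i => R i j) := by
  ext j i
  simp [ofRel, apply_ite star]

section

variable [Fintype n] [DecidableEq m] {R : m → n → Prop} [DecidableRel R]

theorem existsUnique_of_ofRel_mul_ofRel_swap_eq_one [Semiring α] [CharZero α]
    (h : (ofRel R : Matrix m n α) * (ofRel (fun j i => R i j) : Matrix n m α) = 1) (i : m) :
    ∃! j, R i j := by
  have hii := congrFun₂ h i i
  rw [ofRel_mul_ofRel_apply, one_apply_eq, Nat.cast_eq_one] at hii
  simpa [Fintype.existsUnique_iff_card_one] using hii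

theorem ofRel_mul_ofRel_swap_eq_one [Semiring α] (hrow : ∀ i, ∃! j, R i j)
    (hcol : ∀ j i i', R i j → R i' j → i = i') :
    (ofRel R : Matrix m n α) * (ofRel (fun j i => R i j) : Matrix n m α) = 1 := by
  ext i i'
  rw [ofRel_mul_ofRel_apply, one_apply]
  split_ifs with hii'
  · subst hii'
    simp only [and_self, (Fintype.existsUnique_iff_card_one _).1 (hrow i), Nat.cast_one]
  · rw [card_eq_zero.2 (filter_eq_empty_iff.2 fun j _ hj => hii' (hcol j i i' hj.1 hj.2)),
      Nat.cast_zero]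

end

theorem ofRel_mem_unitaryGroup_iff [Fintype m] [DecidableEq m] [CommRing α] [StarRing α]
    [CharZero α] (R : m → m → Prop) [DecidableRel R] :
    ofRel R ∈ unitaryGroup m α ↔ (∀ i, ∃! j, R i j) ∧ ∀ j, ∃! i, R i j := by
  rw [Unitary.mem_iff, star_eq_conjTranspose, conjTranspose_ofRel]
  refine ⟨fun ⟨hcol, hrow⟩ => ⟨existsUnique_of_ofRel_mul_ofRel_swap_eq_one hrow,
    existsUnique_of_ofRel_mul_ofRel_swap_eq_one hcol⟩, fun ⟨hrow, hcol⟩ => ⟨?_, ?_⟩⟩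
  · exact ofRel_mul_ofRel_swap_eq_one hcol fun i j j' hj hj' => (hrow i).unique hj hj'
  · exact ofRel_mul_ofRel_swap_eq_one hrow fun j i i' hi hi' => (hcol j).unique hi hi'

end Matrix

section PermutationOperator

variable {q : ℕ} (k l : Fin q → Fin q → Fin q)

theorem Pmat_eq_ofRel : Pmat k l = ofRel fun p r => p = (k r.1 r.2, l r.1 r.2) := by
  ext p r
  simp [Pmat, ofRel, Prod.ext_iff]

theorem R2_Pmat_eq_ofRel :
    R2 (Pmat k l) = ofRel fun (p r : Fin q × Fin q) => k p.2 r.2 = p.1 ∧ l p.2 r.2 = r.1 := by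
  ext p r
  simp only [R2, Pmat, ofRel, of_apply, eq_comm]

theorem T2_Pmat_eq_ofRel :
    T2 (Pmat k l) = ofRel fun (p r : Fin q × Fin q) => k r.1 p.2 = p.1 ∧ l r.1 p.2 = r.2 := by
  ext p r
  simp only [T2, Pmat, ofRel, of_apply, eq_comm]

theorem Pmat_mem_unitaryGroup_iff :
    Pmat k l ∈ unitaryGroup (Fin q × Fin q) ℂ ↔
      Bijective fun p : Fin q × Fin q => (k p.1 p.2, l p.1 p.2) := by
  rw [Pmat_eq_ofRel, ofRel_mem_unitaryGroup_iff, bijective_iff_existsUnique]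
  simp only [existsUnique_eq, implies_true, and_true, eq_comm]

theorem R2_Pmat_mem_unitaryGroup_iff :
    R2 (Pmat k l) ∈ unitaryGroup (Fin q × Fin q) ℂ ↔
      (∀ i, Bijective (k i)) ∧ ∀ j, Bijective (l · j) := by
  simp only [R2_Pmat_eq_ofRel, ofRel_mem_unitaryGroup_iff, bijective_iff_existsUnique, Prod.forall]
  refine and_congr (forall_comm.trans (forall₂_congr fun i a => ?_))
    (forall_comm.trans (forall₂_congr fun j b => ?_))
  · exact existsUnique_prod_and_fst_eq (l i) (k i · = a)
  · exact existsUnique_prod_fst_eq_and (k · j) (l · j = b)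

theorem T2_Pmat_mem_unitaryGroup_iff :
    T2 (Pmat k l) ∈ unitaryGroup (Fin q × Fin q) ℂ ↔
      (∀ j, Bijective (k · j)) ∧ ∀ i, Bijective (l i) := by
  simp only [T2_Pmat_eq_ofRel, ofRel_mem_unitaryGroup_iff, bijective_iff_existsUnique, Prod.forall]
  refine and_congr (forall_comm.trans (forall₂_congr fun j a => ?_)) (forall₂_congr fun i b => ?_)
  · exact existsUnique_prod_and_snd_eq (l · j) (k · j = a)
  · exact existsUnique_prod_fst_eq_and (k i) (l i · = b)

end PermutationOperator

/-- the permutation operator `P` is 2-unitary (`P`, `P^{R2}`,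
`P^{T2}` all unitary) iff `K = (k_{ij})` and `L = (l_{ij})` are both Latin
squares, i.e. each row and each column of `K` and of `L` has distinct
entries (which, with the bijectivity of `(i,j) ↦ (k_{ij}, l_{ij})`, makes
them mutually orthogonal Latin squares). -/
theorem permutation_two_unitary_iff_latin_squares (q : ℕ)
    (k l : Fin q → Fin q → Fin q)
    (hbij : Function.Bijective (fun p : Fin q × Fin q => (k p.1 p.2, l p.1 p.2))) :
    (Pmat k l ∈ Matrix.unitaryGroup (Fin q × Fin q) ℂ ∧
      R2 (Pmat k l) ∈ Matrix.unitaryGroup (Fin q × Fin q) ℂ ∧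
      T2 (Pmat k l) ∈ Matrix.unitaryGroup (Fin q × Fin q) ℂ) ↔
    ((∀ i, Function.Injective (fun j => k i j)) ∧
      (∀ j, Function.Injective (fun i => k i j)) ∧
      (∀ i, Function.Injective (fun j => l i j)) ∧
      (∀ j, Function.Injective (fun i => l i j))) := by
  have hP : Pmat k l ∈ unitaryGroup (Fin q × Fin q) ℂ := (Pmat_mem_unitaryGroup_iff k l).2 hbij
  simp only [hP, true_and, R2_Pmat_mem_unitaryGroup_iff, T2_Pmat_mem_unitaryGroup_iff,
    Finite.injective_iff_bijective]
  tauto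
end

section
/- For the coupled quantum cat map U_C with ⟨kα|U_C|jβ⟩ = (1/q)exp(-(2πi/q)[kα + 2jβ - kβ - jα]), one has ⟨kα|U_C^{T1}U_C^{T1†}|jβ⟩ = e^{(2πi/q)(kα-jβ)} δ_{α,β} δ_{2(j-k) mod q, 0}. Consequently, U_C^{T1} is unitary (so U_C is 2-unitary) if and only if q is odd. -/
open Matrix

/-- Realignment R1 : `⟨βα|A^{R1}|ji⟩ = ⟨iα|A|jβ⟩`. -/
def R1 {q : ℕ} (A : MQ q) : MQ q := fun p r => A (r.2, p.2) (r.1, p.1)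

/-- The swap operator `S|iα⟩ = |αi⟩`. -/
def Swap (q : ℕ) : MQ q := fun p r => if p.1 = r.2 ∧ p.2 = r.1 then 1 else 0

/-- Partial transpose on the first factor: `⟨jα|A^{T1}|iβ⟩ = ⟨iα|A|jβ⟩`. -/
def T1 {q : ℕ} (A : MQ q) : MQ q := fun p r => A (r.1, p.2) (p.1, r.2)

/-- The coupled quantum cat map:
`⟨kα|U_C|jβ⟩ = (1/q) exp(-(2πi/q)[kα + 2jβ - kβ - jα])`. -/
noncomputable def catMap (q : ℕ) : MQ q := fun p r =>
  (q : ℂ)⁻¹ * Complex.exp (-(2 * Real.pi * Complex.I / q) *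
    (((p.1.val * p.2.val : ℤ) + 2 * (r.1.val * r.2.val : ℤ)
      - (p.1.val * r.2.val : ℤ) - (p.2.val * r.1.val : ℤ) : ℤ) : ℂ))

/-! With `e(t) = exp(2πi t/q)`, the entry `⟨kα|U^{T1} U^{T1†}|jβ⟩` equals
`q⁻² ∑_{a,b} e(kα - jβ + a(β - α) + 2b(j - k))`, which factors into two geometric sums in a
primitive `q`-th root of unity; these produce the deltas `q ∣ β - α` and `q ∣ 2(j - k)`.
The product is therefore the identity exactly when `q ∣ 2(j - k)` forces `j = k`, i.e. when `2`
is invertible modulo `q`. -/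

open Complex Real Finset

noncomputable def phase (q : ℕ) (t : ℤ) : ℂ := exp (2 * π * I / q * t)

section phase

variable {q : ℕ}

lemma phase_add (s t : ℤ) : phase q (s + t) = phase q s * phase q t := by
  simp only [phase, Int.cast_add, mul_add, Complex.exp_add]

lemma phase_zero : phase q 0 = 1 := by simp [phase]

lemma star_phase (t : ℤ) : star (phase q t) = phase q (-t) := by
  simp only [phase, RCLike.star_def, ← exp_conj, map_mul, map_div₀, conj_I, conj_ofReal,
    map_ofNat, conj_natCast, map_intCast, Int.cast_neg]
  ring_nf

lemma phase_eq_zpow (t : ℤ) : phase q t = exp (2 * π * I / q) ^ t := by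
  rw [phase, mul_comm, exp_int_mul]

lemma sum_phase_mul (t : ℤ) :
    ∑ m : Fin q, phase q (t * m) = if (q : ℤ) ∣ t then (q : ℂ) else 0 := by
  obtain rfl | hq := eq_or_ne q 0
  · simp
  have hζ := isPrimitiveRoot_exp q hq
  set ω := exp (2 * π * I / q) ^ t
  have hterm (m : Fin q) : phase q (t * m) = ω ^ (m : ℕ) := by
    rw [phase_eq_zpow, _root_.zpow_mul, zpow_natCast]
  simp only [hterm, Fin.sum_univ_eq_sum_range (ω ^ ·)]
  split_ifs with hdvd
  · simp [ω, (hζ.zpow_eq_one_iff_dvd t).mpr hdvd]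
  · have hωq : ω ^ q = 1 := by
      rw [← zpow_natCast, ← _root_.zpow_mul, mul_comm t, _root_.zpow_mul, zpow_natCast,
        hζ.pow_eq_one, _root_.one_zpow]
    rw [geom_sum_eq (mt (hζ.zpow_eq_one_iff_dvd t).mp hdvd), hωq, sub_self, zero_div]

end phase

lemma Fin.intCast_dvd_val_sub_val_iff {q : ℕ} {a b : Fin q} :
    (q : ℤ) ∣ (a : ℤ) - b ↔ a = b := by
  rw [← Int.modEq_iff_dvd, Int.natCast_modEq_iff]
  exact ⟨fun h => Fin.ext (h.eq_of_lt_of_lt b.isLt a.isLt).symm, fun h => h ▸ rfl⟩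

lemma forall_dvd_two_mul_sub_imp_eq_iff_odd {q : ℕ} (hq : q ≠ 0) :
    (∀ j k : Fin q, (q : ℤ) ∣ 2 * ((j : ℤ) - k) → j = k) ↔ Odd q := by
  constructor
  · intro h
    by_contra hodd
    obtain ⟨s, rfl⟩ := Nat.not_odd_iff_even.mp hodd
    have hs : s = 0 := Fin.mk.inj_iff.mp (h ⟨s, by omega⟩ ⟨0, by omega⟩ ⟨1, by push_cast; ring⟩)
    omega
  · intro hodd j k hdvd
    have hcop : IsCoprime (q : ℤ) 2 := by
      rw [Int.isCoprime_iff_gcd_eq_one]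
      exact Nat.coprime_two_right.mpr hodd
    exact Fin.intCast_dvd_val_sub_val_iff.mp (hcop.dvd_of_dvd_mul_left hdvd)

lemma catMap_apply (q : ℕ) (p r : Fin q × Fin q) :
    catMap q p r = (q : ℂ)⁻¹ *
      phase q (-(p.1 * p.2 + 2 * (r.1 * r.2) - p.1 * r.2 - p.2 * r.1)) := by
  simp only [catMap, phase]
  push_cast
  ring_nf

lemma T1_catMap_mul_star_apply (q : ℕ) (p r x : Fin q × Fin q) :
    T1 (catMap q) p x * star (T1 (catMap q) r x) =
      phase q (p.1 * p.2 - r.1 * r.2) *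
        ((q : ℂ)⁻¹ * phase q ((r.2 - p.2) * x.1)) *
        ((q : ℂ)⁻¹ * phase q (2 * (r.1 - p.1) * x.2)) := by
  simp only [T1, catMap_apply, star_mul', star_phase, star_inv₀, star_natCast]
  calc _ = (q : ℂ)⁻¹ * (q : ℂ)⁻¹ * phase q (-(x.1 * p.2 + 2 * (p.1 * x.2) - x.1 * x.2 - p.2 * p.1)
          + -(-(x.1 * r.2 + 2 * (r.1 * x.2) - x.1 * x.2 - r.2 * r.1))) := by
        rw [phase_add]; ring
    _ = (q : ℂ)⁻¹ * (q : ℂ)⁻¹ * phase q ((p.1 * p.2 - r.1 * r.2) + (r.2 - p.2) * x.1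
          + 2 * (r.1 - p.1) * x.2) := by
        congr 2; ring
    _ = _ := by rw [phase_add, phase_add]; ring

lemma T1_catMap_mul_conjTranspose_apply (q : ℕ) (p r : Fin q × Fin q) :
    (T1 (catMap q) * (T1 (catMap q))ᴴ) p r =
      phase q (p.1 * p.2 - r.1 * r.2) * (if p.2 = r.2 then 1 else 0) *
        (if (q : ℤ) ∣ 2 * (r.1 - p.1) then 1 else 0) := by
  obtain rfl | hq := eq_or_ne q 0
  · exact p.1.elim0
  simp only [mul_apply, conjTranspose_apply, T1_catMap_mul_star_apply, Fintype.sum_prod_type,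
    ← mul_sum, ← sum_mul, ← mul_sum, sum_phase_mul, Fin.intCast_dvd_val_sub_val_iff, eq_comm]
  have hq' : (q : ℂ)⁻¹ * q = 1 := inv_mul_cancel₀ (Nat.cast_ne_zero.mpr hq)
  simp only [mul_ite, mul_zero, hq']

lemma T1_catMap_mul_conjTranspose_eq_one_iff {q : ℕ} (hq : q ≠ 0) :
    T1 (catMap q) * (T1 (catMap q))ᴴ = 1 ↔
      ∀ j k : Fin q, (q : ℤ) ∣ 2 * ((j : ℤ) - k) → j = k := by
  simp only [← Matrix.ext_iff, T1_catMap_mul_conjTranspose_apply, one_apply]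
  constructor
  · intro h j k hdvd
    have h0 : 0 < q := Nat.pos_of_ne_zero hq
    simpa [hdvd, phase_zero, eq_comm] using h (k, ⟨0, h0⟩) (j, ⟨0, h0⟩)
  · intro h p r
    by_cases hpr : p = r
    · simp [hpr, phase_zero]
    rw [if_neg hpr]
    split_ifs with h2 hdvd
    · exact absurd (Prod.ext (h _ _ hdvd).symm h2) hpr
    all_goals simp

/-- the entries of `U_C^{T1} U_C^{T1†}` are
`⟨kα|U_C^{T1}U_C^{T1†}|jβ⟩ = e^{(2πi/q)(kα-jβ)} δ_{α,β} δ_{2(j-k) mod q, 0}`;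
consequently `U_C^{T1}` is unitary (so `U_C` is 2-unitary) iff `q` is odd. -/
theorem catMap_T1_entries_and_two_unitary_iff_odd (q : ℕ) (hq : 0 < q) :
    (∀ p r : Fin q × Fin q,
      (T1 (catMap q) * (T1 (catMap q))ᴴ) p r =
        Complex.exp ((2 * Real.pi * Complex.I / q) *
            (((p.1.val * p.2.val : ℤ) - (r.1.val * r.2.val : ℤ) : ℤ) : ℂ)) *
          (if p.2 = r.2 then 1 else 0) *
          (if (2 * ((r.1.val : ℤ) - (p.1.val : ℤ))) % (q : ℤ) = 0 then 1 else 0)) ∧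
    (T1 (catMap q) ∈ Matrix.unitaryGroup (Fin q × Fin q) ℂ ↔ Odd q) := by
  refine ⟨fun p r => ?_, ?_⟩
  · simpa only [phase, ← Int.dvd_iff_emod_eq_zero] using T1_catMap_mul_conjTranspose_apply q p r
  · rw [mem_unitaryGroup_iff, star_eq_conjTranspose, T1_catMap_mul_conjTranspose_eq_one_iff hq.ne',
      forall_dvd_two_mul_sub_imp_eq_iff_odd hq.ne']
end
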